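/- For probability distributions μ, π on a finite alphabet with full support and μ ≠ π, and for every k ≥ 1, if D(π‖μ) < ∞, then inf_p [k·D(μ‖p) + D(π‖p)] < k·D(μ‖π), a strict improvement over plugging in p = π. -/
import Mathlib


open Finset
open scoped Classical

/-- `p` is a probability mass function on the finite alphabet `Y`. -/
def IsPMF {Y : Type*} [Fintype Y] (p : Y → ℝ) : Prop :=
  (∀ y, 0 ≤ p y) ∧ ∑ y, p y = 1

/-- Relative entropy (KL divergence), with the convention `0 log 0 = 0`
(automatic since `0 * log _ = 0` in `ℝ`). -/
noncomputable def KL {Y : Type*} [Fintype Y] (p q : Y → ℝ) : ℝ :=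
  ∑ y, p y * Real.log (p y / q y)

lemma KL_pos {Y : Type*} [Fintype Y] (p q : Y → ℝ)
    (hp : IsPMF p) (hq : IsPMF q) (hppos : ∀ y, 0 < p y) (hqpos : ∀ y, 0 < q y)
    (hne : p ≠ q) : 0 < KL p q := by
  have hmul : ∀ y : Y, p y * (1 - q y / p y) = p y - q y := by
    intro y
    have h0 : p y ≠ 0 := ne_of_gt (hppos y)
    field_simp
  have hle : ∀ y ∈ Finset.univ (α := Y), p y - q y ≤ p y * Real.log (p y / q y) := by
    intro y _
    have h1 : Real.log (q y / p y) ≤ q y / p y - 1 :=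
      Real.log_le_sub_one_of_pos (div_pos (hqpos y) (hppos y))
    have h2 : 1 - q y / p y ≤ Real.log (p y / q y) := by
      rw [Real.log_div (ne_of_gt (hppos y)) (ne_of_gt (hqpos y))]
      rw [Real.log_div (ne_of_gt (hqpos y)) (ne_of_gt (hppos y))] at h1
      linarith
    have := mul_le_mul_of_nonneg_left h2 (le_of_lt (hppos y))
    rw [hmul y] at this
    exact this
  obtain ⟨y0, hy0⟩ : ∃ y, p y ≠ q y := by
    by_contra h
    push_neg at h
    exact hne (funext h)
  have hlt : p y0 - q y0 < p y0 * Real.log (p y0 / q y0) := by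
    have hx : q y0 / p y0 ≠ 1 := by
      intro h
      exact hy0 ((div_eq_one_iff_eq (ne_of_gt (hppos y0))).mp h).symm
    have h1 : Real.log (q y0 / p y0) < q y0 / p y0 - 1 :=
      Real.log_lt_sub_one_of_pos (div_pos (hqpos y0) (hppos y0)) hx
    have h2 : 1 - q y0 / p y0 < Real.log (p y0 / q y0) := by
      rw [Real.log_div (ne_of_gt (hppos y0)) (ne_of_gt (hqpos y0))]
      rw [Real.log_div (ne_of_gt (hqpos y0)) (ne_of_gt (hppos y0))] at h1
      linarith
    have := mul_lt_mul_of_pos_left h2 (hppos y0)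
    rw [hmul y0] at this
    exact this
  have hsum : ∑ y, (p y - q y) < ∑ y, p y * Real.log (p y / q y) :=
    Finset.sum_lt_sum hle ⟨y0, Finset.mem_univ y0, hlt⟩
  have h0 : ∑ y, (p y - q y) = 0 := by
    rw [Finset.sum_sub_distrib, hp.2, hq.2]; ring
  rw [h0] at hsum
  exact hsum

lemma KL_self {Y : Type*} [Fintype Y] (p : Y → ℝ) (hppos : ∀ y, 0 < p y) :
    KL p p = 0 := by
  unfold KL
  apply Finset.sum_eq_zero
  intro y _
  rw [div_self (ne_of_gt (hppos y)), Real.log_one, mul_zero]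

lemma KL_nonneg {Y : Type*} [Fintype Y] (p q : Y → ℝ)
    (hp : IsPMF p) (hq : IsPMF q) (hppos : ∀ y, 0 < p y) (hqpos : ∀ y, 0 < q y) :
    0 ≤ KL p q := by
  by_cases h : p = q
  · subst h; rw [KL_self p hppos]
  · exact le_of_lt (KL_pos p q hp hq hppos hqpos h)

theorem eta_strict_improvement {Y : Type*} [Fintype Y] (μ π : Y → ℝ)
    (hμ : IsPMF μ) (hπ : IsPMF π) (hμpos : ∀ y, 0 < μ y) (hπpos : ∀ y, 0 < π y)
    (hne : μ ≠ π) (k : ℕ) (hk : 1 ≤ k) :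
    (sInf {x : ℝ | ∃ p : Y → ℝ, IsPMF p ∧ (∀ y, 0 < p y) ∧
        x = (k : ℝ) * KL μ p + KL π p} < (k : ℝ) * KL μ π ∨
      sInf {x : ℝ | ∃ p : Y → ℝ, IsPMF p ∧ (∀ y, 0 < p y) ∧
        x = (k : ℝ) * KL μ p + KL π p} < KL π μ) ∧
    sInf {x : ℝ | ∃ p : Y → ℝ, IsPMF p ∧ (∀ y, 0 < p y) ∧
      x = (k : ℝ) * KL μ p + KL π p} < (k : ℝ) * KL μ π := by
  set S := {x : ℝ | ∃ p : Y → ℝ, IsPMF p ∧ (∀ y, 0 < p y) ∧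
      x = (k : ℝ) * KL μ p + KL π p} with hS
  have hkpos : (0:ℝ) < (k:ℝ) := by
    have : (0:ℕ) < k := hk
    exact_mod_cast this
  have hk1 : (0:ℝ) < (k:ℝ) + 1 := by linarith
  -- the mixture
  set m : Y → ℝ := fun y => ((k:ℝ) * μ y + π y) / ((k:ℝ) + 1) with hm
  have hmpos : ∀ y, 0 < m y := by
    intro y
    apply div_pos _ hk1
    have := hμpos y; have := hπpos y
    nlinarith
  have hmpmf : IsPMF m := by
    constructor
    · intro y; exact le_of_lt (hmpos y)
    · rw [hm]
      simp only
      rw [← Finset.sum_div, Finset.sum_add_distrib, ← Finset.mul_sum, hμ.2, hπ.2]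
      field_simp
  have hmne : m ≠ π := by
    intro h
    apply hne
    funext y
    have hy := congrFun h y
    rw [hm] at hy
    simp only at hy
    have : (k:ℝ) * μ y + π y = ((k:ℝ) + 1) * π y := by
      field_simp at hy
      linarith [hy]
    have : (k:ℝ) * μ y = (k:ℝ) * π y := by linarith
    exact mul_left_cancel₀ (ne_of_gt hkpos) this
  -- key identity
  have key : (k:ℝ) * KL μ m + KL π m + ((k:ℝ) + 1) * KL m π
      = (k:ℝ) * KL μ π + KL π π := by
    unfold KL
    rw [Finset.mul_sum, Finset.mul_sum, Finset.mul_sum,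
      ← Finset.sum_add_distrib, ← Finset.sum_add_distrib, ← Finset.sum_add_distrib]
    apply Finset.sum_congr rfl
    intro y _
    have hmy : ((k:ℝ) + 1) * m y = (k:ℝ) * μ y + π y := by
      rw [hm]; field_simp
    rw [Real.log_div (ne_of_gt (hμpos y)) (ne_of_gt (hmpos y)),
      Real.log_div (ne_of_gt (hπpos y)) (ne_of_gt (hmpos y)),
      Real.log_div (ne_of_gt (hmpos y)) (ne_of_gt (hπpos y)),
      Real.log_div (ne_of_gt (hμpos y)) (ne_of_gt (hπpos y)),
      Real.log_div (ne_of_gt (hπpos y)) (ne_of_gt (hπpos y))]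
    linear_combination (Real.log (m y) - Real.log (π y)) * hmy
  have hKLππ : KL π π = 0 := KL_self π hπpos
  have hKLmπ : 0 < KL m π := KL_pos m π hmpmf hπ hmpos hπpos hmne
  have hFm : (k:ℝ) * KL μ m + KL π m < (k:ℝ) * KL μ π := by
    have : ((k:ℝ) + 1) * KL m π > 0 := mul_pos hk1 hKLmπ
    rw [hKLππ] at key
    linarith
  have hmem : (k:ℝ) * KL μ m + KL π m ∈ S := ⟨m, hmpmf, hmpos, rfl⟩
  have hbdd : BddBelow S := by
    refine ⟨0, ?_⟩
    rintro x ⟨p, hp, hppos, rfl⟩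
    have h1 := KL_nonneg μ p hμ hp hμpos hppos
    have h2 := KL_nonneg π p hπ hp hπpos hppos
    nlinarith
  have hinf : sInf S < (k:ℝ) * KL μ π :=
    lt_of_le_of_lt (csInf_le hbdd hmem) hFm
  exact ⟨Or.inl hinf, hinf⟩
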